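/- For (λ,μ) ∈ ℂ^2 ∖ {(0,0)}, let J_{(λ:μ)} ⊂ ℂ[x0,...,x8] be the ideal generated by the monomials x_i x_{i+2} (i ∈ ℤ/9), x_i x_{i+3} x_{i+6} (i ∈ ℤ/9), together with the nine trinomials λ·x_{i+4}x_{i+7}^2 − μ·x_{i+3}x_{i+7}x_{i+8} + λ·x_{i+2}x_{i+8}^2 (i ∈ ℤ/9), indices mod 9. Then the common zero locus of J_{(λ:μ)} in ℂ^9 equals the union ⋃_{i ∈ ℤ/9} Q_i, where Q_i = {x ∈ ℂ^9 : x_i = x_{i+1} = x_{i+4} = x_{i+5} = x_{i+8} = 0 and λ·x_{i+3}x_{i+6} = μ·x_{i+2}x_{i+7}} (indices mod 9); i.e. set-theoretically the scheme X_{(λ:μ)} defined by J_{(λ:μ)} is the union of the nine quadric surfaces σ^i(Q_0), where Q_0 = L_0 ∩ {λx_3x_6 − μx_2x_7 = 0} and L_0 = {x0 = x1 = x4 = x5 = x8 = 0}. -/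

import Mathlib

/-!
Around a nonzero coordinate `x_a`, the monomials `x_i x_{i+2}` kill `x_{a±2}`; a short case
analysis on the remaining neighbours, using `x_i x_{i+3} x_{i+6}` once, confines the support of
`x` to one of the linear spaces `L_i = {x_i = x_{i+1} = x_{i+4} = x_{i+5} = x_{i+8} = 0}`. On
`L_i` every trinomial is either zero or `x_j · (λ x_{i+3} x_{i+6} - μ x_{i+2} x_{i+7})` for a
coordinate `x_j` that is nonzero in the relevant case, so the trinomials cut out exactly the
quadric `Q_i`. The cyclic shift permutes both the generators and the `Q_i`, so it suffices to
treat `a = 0` and `i = 0`.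
-/

open MvPolynomial

/-- The ideal `J_{(λ:μ)} ⊂ ℂ[x0,…,x8]` generated by the monomials `x_i x_{i+2}`,
`x_i x_{i+3} x_{i+6}` and the trinomials
`λ·x_{i+4}x_{i+7}² − μ·x_{i+3}x_{i+7}x_{i+8} + λ·x_{i+2}x_{i+8}²` (indices mod 9). -/
noncomputable def idealJlm (l μ : ℂ) : Ideal (MvPolynomial (Fin 9) ℂ) :=
  Ideal.span
    ((Set.range fun i : Fin 9 => X i * X (i + 2)) ∪
     (Set.range fun i : Fin 9 => X i * X (i + 3) * X (i + 6)) ∪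
     (Set.range fun i : Fin 9 =>
       C l * (X (i + 4) * X (i + 7) ^ 2) - C μ * (X (i + 3) * X (i + 7) * X (i + 8))
         + C l * (X (i + 2) * X (i + 8) ^ 2)))

theorem MvPolynomial.eval_eq_zero_on_span_iff {σ R : Type*} [CommSemiring R] (x : σ → R)
    (s : Set (MvPolynomial σ R)) :
    (∀ f ∈ Ideal.span s, eval x f = 0) ↔ ∀ f ∈ s, eval x f = 0 :=
  ⟨fun h _ hf => h _ (Ideal.subset_span hf),
    fun h _ hf => (Ideal.span_le (I := RingHom.ker (eval x))).2 h hf⟩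

namespace Jlm

variable {K : Type*} [CommRing K] {l μ : K} {x : Fin 9 → K}

structure GeneratorsVanish (l μ : K) (x : Fin 9 → K) : Prop where
  quadratic (k : Fin 9) : x k * x (k + 2) = 0
  cubic (k : Fin 9) : x k * x (k + 3) * x (k + 6) = 0
  trinomial (k : Fin 9) : l * (x (k + 4) * x (k + 7) ^ 2) - μ * (x (k + 3) * x (k + 7) * x (k + 8))
    + l * (x (k + 2) * x (k + 8) ^ 2) = 0

def quadricCone (l μ : K) (i : Fin 9) : Set (Fin 9 → K) :=
  {x | x i = 0 ∧ x (i + 1) = 0 ∧ x (i + 4) = 0 ∧ x (i + 5) = 0 ∧ x (i + 8) = 0 ∧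
    l * (x (i + 3) * x (i + 6)) = μ * (x (i + 2) * x (i + 7))}

theorem eval_eq_zero_on_idealJlm_iff {l μ : ℂ} {x : Fin 9 → ℂ} :
    (∀ f ∈ idealJlm l μ, eval x f = 0) ↔ GeneratorsVanish l μ x := by
  simp only [idealJlm, eval_eq_zero_on_span_iff, Set.mem_union, or_imp, forall_and,
    Set.forall_mem_range, map_add, map_sub, map_mul, map_pow, eval_C, eval_X]
  exact ⟨fun ⟨⟨hq, hc⟩, ht⟩ => ⟨hq, hc, ht⟩, fun ⟨hq, hc, ht⟩ => ⟨⟨hq, hc⟩, ht⟩⟩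

theorem GeneratorsVanish.shift (hx : GeneratorsVanish l μ x) (a : Fin 9) :
    GeneratorsVanish l μ (fun k => x (a + k)) where
  quadratic k := by simpa only [add_assoc] using hx.quadratic (a + k)
  cubic k := by simpa only [add_assoc] using hx.cubic (a + k)
  trinomial k := by simpa only [add_assoc] using hx.trinomial (a + k)

theorem generatorsVanish_shift_iff (a : Fin 9) :
    GeneratorsVanish l μ (fun k => x (a + k)) ↔ GeneratorsVanish l μ x :=
  ⟨fun h => by simpa only [add_neg_cancel_left] using h.shift (-a), fun h => h.shift a⟩

theorem mem_quadricCone_iff_shift (i : Fin 9) :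
    x ∈ quadricCone l μ i ↔ (fun k => x (i + k)) ∈ quadricCone l μ 0 := by
  simp only [quadricCone, Set.mem_ofPred_eq, zero_add, add_zero]

theorem generatorsVanish_of_mem_quadricCone_zero (hx : x ∈ quadricCone l μ 0) :
    GeneratorsVanish l μ x := by
  obtain ⟨h0, h1, h4, h5, h8, hrel⟩ := hx
  simp only [zero_add] at h0 h1 h4 h5 h8 hrel
  constructor <;> intro k <;> fin_cases k <;> simp [h0, h1, h4, h5, h8]
  · linear_combination x 3 * hrel
  · linear_combination x 6 * hrel

theorem exists_mem_quadricCone_of_apply_zero_ne_zero [IsDomain K] (hx : GeneratorsVanish l μ x)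
    (hx0 : x 0 ≠ 0) : ∃ i, x ∈ quadricCone l μ i := by
  have quad (i j : Fin 9) (hij : i + 2 = j) : x i = 0 ∨ x j = 0 :=
    mul_eq_zero.1 (hij ▸ hx.quadratic i)
  have t1 := hx.trinomial 1
  have t2 := hx.trinomial 2
  have t6 := hx.trinomial 6
  have t7 := hx.trinomial 7
  simp only [Fin.reduceAdd, Fin.isValue] at t1 t2 t6 t7
  have h2 : x 2 = 0 := (quad 0 2 rfl).resolve_left hx0
  have h7 : x 7 = 0 := (quad 7 0 rfl).resolve_right hx0
  by_cases h3 : x 3 = 0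
  swap
  · have h1 : x 1 = 0 := (quad 1 3 rfl).resolve_right h3
    have h5 : x 5 = 0 := (quad 3 5 rfl).resolve_left h3
    have h6 : x 6 = 0 := (mul_eq_zero.1 (hx.cubic 0)).resolve_left (mul_ne_zero hx0 h3)
    have hrel : l * (x 0 * x 3) = μ * (x 8 * x 4) :=
      mul_left_cancel₀ hx0 (by linear_combination t1 - l * x 8 ^ 2 * h5)
    exact ⟨6, h6, h7, h1, h2, h5, hrel⟩
  by_cases h6 : x 6 = 0
  swap
  · have h4 : x 4 = 0 := (quad 4 6 rfl).resolve_right h6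
    have h8 : x 8 = 0 := (quad 6 8 rfl).resolve_left h6
    have hrel : l * (x 6 * x 0) = μ * (x 5 * x 1) :=
      mul_left_cancel₀ h6 (by linear_combination t7 - l * x 5 ^ 2 * h2)
    exact ⟨3, h3, h4, h7, h8, h2, hrel⟩
  by_cases h1 : x 1 = 0
  swap
  · have h8 : x 8 = 0 := (quad 8 1 rfl).resolve_right h1
    have hrel : l * (x 1 * x 4) = μ * (x 0 * x 5) :=
      mul_left_cancel₀ h1 (by linear_combination t2 - l * x 0 ^ 2 * h6)
    exact ⟨7, h7, h8, h2, h3, h6, hrel⟩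
  by_cases h8 : x 8 = 0
  swap
  · have hrel : l * (x 5 * x 8) = μ * (x 4 * x 0) :=
      mul_left_cancel₀ h8 (by linear_combination t1 - l * x 0 ^ 2 * h3)
    exact ⟨2, h2, h3, h6, h7, h1, hrel⟩
  by_cases h4 : x 4 = 0
  · have hrel : l * (x 6 * x 0) = μ * (x 5 * x 1) := by rw [h6, h1]; ring
    exact ⟨3, h3, h4, h7, h8, h2, hrel⟩
  · have hrel : l * (x 1 * x 4) = μ * (x 0 * x 5) :=
      mul_left_cancel₀ h4 (by linear_combination t6 - l * x 5 ^ 2 * h8)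
    exact ⟨7, h7, h8, h2, h3, h6, hrel⟩

theorem generatorsVanish_iff_exists_mem_quadricCone [IsDomain K] :
    GeneratorsVanish l μ x ↔ ∃ i, x ∈ quadricCone l μ i := by
  refine ⟨fun hx => ?_, fun ⟨i, hi⟩ => ?_⟩
  · by_cases hzero : x = 0
    · exact ⟨0, by simp [quadricCone, hzero]⟩
    obtain ⟨a, ha⟩ := Function.ne_iff.1 hzero
    obtain ⟨i, hi⟩ := exists_mem_quadricCone_of_apply_zero_ne_zero (hx.shift a)
      (by simpa only [add_zero, Pi.zero_apply] using ha)
    refine ⟨a + i, (mem_quadricCone_iff_shift _).2 ?_⟩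
    simpa only [add_assoc] using (mem_quadricCone_iff_shift i).1 hi
  · exact (generatorsVanish_shift_iff i).1
      (generatorsVanish_of_mem_quadricCone_zero ((mem_quadricCone_iff_shift i).1 hi))

end Jlm

theorem zeroLocus_Jlm_general (l μ : ℂ) :
    {x : Fin 9 → ℂ | ∀ f ∈ idealJlm l μ, eval x f = 0} =
      ⋃ i : Fin 9,
        {x : Fin 9 → ℂ |
          x i = 0 ∧ x (i + 1) = 0 ∧ x (i + 4) = 0 ∧ x (i + 5) = 0 ∧ x (i + 8) = 0 ∧
          l * (x (i + 3) * x (i + 6)) = μ * (x (i + 2) * x (i + 7))} := by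
  ext x
  simp only [Set.mem_ofPred_eq, Set.mem_iUnion]
  rw [Jlm.eval_eq_zero_on_idealJlm_iff]
  exact Jlm.generatorsVanish_iff_exists_mem_quadricCone

/-- For `(λ,μ) ≠ (0,0)`, the zero locus of `J_{(λ:μ)}` in `ℂ⁹` is the union of the
nine quadric cones `Q_i = {x_i = x_{i+1} = x_{i+4} = x_{i+5} = x_{i+8} = 0,
λx_{i+3}x_{i+6} = μx_{i+2}x_{i+7}}` (indices mod 9); i.e. set-theoretically
`X_{(λ:μ)}` is the union of the nine quadric surfaces `σ^i(Q₀) ⊂ P⁸`. -/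
theorem zeroLocus_Jlm (l μ : ℂ) (h : (l, μ) ≠ (0, 0)) :
    {x : Fin 9 → ℂ | ∀ f ∈ idealJlm l μ, eval x f = 0} =
      ⋃ i : Fin 9,
        {x : Fin 9 → ℂ |
          x i = 0 ∧ x (i + 1) = 0 ∧ x (i + 4) = 0 ∧ x (i + 5) = 0 ∧ x (i + 8) = 0 ∧
          l * (x (i + 3) * x (i + 6)) = μ * (x (i + 2) * x (i + 7))} :=
  zeroLocus_Jlm_general l μ
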